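/- arXiv:2605.05397 — 2 statements merged into one kernel-verified Lean document; each statement's English description precedes it below -/
import Mathlib

section
/- Let 1 < p < ∞, let m be a positive integer and let a_1, …, a_m be real numbers. The polynomial type operator Q_m : ℓ^p → ℓ^p defined by Q_m(x) = (∑_{i=1}^m a_i x_n^i)_{n=1}^∞ is well defined and Fréchet differentiable at every x̄ = (x̄_n)_n ∈ ℓ^p, with Fréchet derivative the continuous linear pointwise multiplication operator v = (v_n)_n ↦ (∑_{i=1}^m i a_i x̄_n^{i−1} v_n)_n. -/
/-!
Since `‖x‖_∞ ≤ ‖x‖_p`, the space `ℓ^p` embeds contractively in `ℓ^∞`, and `ℓ^∞` acts on `ℓ^p` by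
pointwise multiplication (Hölder with exponents `∞, p, p`). Pointwise multiplication is therefore
a continuous bilinear map on `ℓ^p`, so the pointwise powers `x ↦ x^(k+1)` are differentiable by
induction and the product rule, and `Q_m` is a linear combination of them.
-/

open scoped ENNReal

namespace lp

variable {α 𝕜 : Type*} [RCLike 𝕜] {p : ℝ≥0∞} [Fact (1 ≤ p)]

variable (𝕜 p) in
noncomputable def toInftyCLM : lp (fun _ : α => 𝕜) p →L[𝕜] lp (fun _ : α => 𝕜) ∞ :=
  (linearMapOfLE 𝕜 _ le_top).mkContinuous 1 fun f =>
    norm_le_of_forall_le (by positivity) fun i => by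
      simpa using norm_apply_le_norm (zero_lt_one.trans_le Fact.out).ne' f i

variable (𝕜 p) in
noncomputable def mulL :
    lp (fun _ : α => 𝕜) p →L[𝕜] lp (fun _ : α => 𝕜) p →L[𝕜] lp (fun _ : α => 𝕜) p :=
  (holderL p (fun _ => ContinuousLinearMap.mul 𝕜 𝕜) (K := 1)
    fun _ => ContinuousLinearMap.opNorm_mul_le 𝕜 𝕜).comp (toInftyCLM 𝕜 p)

@[simp]
theorem mulL_apply_apply (f g : lp (fun _ : α => 𝕜) p) (i : α) :
    mulL 𝕜 p f g i = f i * g i := rfl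

variable (𝕜 p) in
/-- `powSucc 𝕜 p k x = x ^ (k + 1)` pointwise; the exponent is shifted since `x ^ 0 = 1` is not in
`ℓ^p` in general. -/
noncomputable def powSucc : ℕ → lp (fun _ : α => 𝕜) p → lp (fun _ : α => 𝕜) p
  | 0, x => x
  | k + 1, x => mulL 𝕜 p x (powSucc k x)

theorem powSucc_apply (k : ℕ) (x : lp (fun _ : α => 𝕜) p) (i : α) :
    powSucc 𝕜 p k x i = x i ^ (k + 1) := by
  induction k with
  | zero => simp [powSucc]
  | succ k ih => simp [powSucc, ih, pow_succ']

theorem hasFDerivAt_powSucc (k : ℕ) (x : lp (fun _ : α => 𝕜) p) :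
    ∃ D : lp (fun _ : α => 𝕜) p →L[𝕜] lp (fun _ : α => 𝕜) p,
      (∀ v i, D v i = (k + 1) * x i ^ k * v i) ∧ HasFDerivAt (powSucc 𝕜 p k) D x := by
  induction k with
  | zero => exact ⟨.id 𝕜 _, fun v i => by simp, hasFDerivAt_id x⟩
  | succ k ih =>
    obtain ⟨D, hD, hxD⟩ := ih
    refine ⟨_, fun v i => ?_, ((mulL 𝕜 p).hasFDerivAt.clm_apply hxD)⟩
    simp only [add_apply, ContinuousLinearMap.comp_apply, ContinuousLinearMap.flip_apply,
      AddSubgroup.coe_add, PreLp.add_apply, mulL_apply_apply, hD, powSucc_apply, Nat.cast_add,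
      Nat.cast_one]
    ring

end lp

open lp in
theorem lp_polynomial_operator_frechet_differentiable_general
    (p : ℝ≥0∞) [Fact (1 ≤ p)] (m : ℕ)
    (a : ℕ → ℝ) :
    (∀ x : lp (fun _ : ℕ => ℝ) p,
      Memℓp (fun n : ℕ => ∑ i ∈ Finset.Icc 1 m, a i * (x n) ^ i) p) ∧
    ∃ Q : lp (fun _ : ℕ => ℝ) p → lp (fun _ : ℕ => ℝ) p,
      (∀ x : lp (fun _ : ℕ => ℝ) p, ∀ n : ℕ,
        Q x n = ∑ i ∈ Finset.Icc 1 m, a i * (x n) ^ i) ∧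
      ∀ xbar : lp (fun _ : ℕ => ℝ) p,
        ∃ D : lp (fun _ : ℕ => ℝ) p →L[ℝ] lp (fun _ : ℕ => ℝ) p,
          (∀ v : lp (fun _ : ℕ => ℝ) p, ∀ n : ℕ,
            D v n = ∑ i ∈ Finset.Icc 1 m, (i : ℝ) * a i * (xbar n) ^ (i - 1) * v n) ∧
          HasFDerivAt Q D xbar := by
  set Q := fun x => ∑ i ∈ Finset.Icc 1 m, a i • powSucc ℝ p (i - 1) x
  have hQ (x : lp (fun _ : ℕ => ℝ) p) (n : ℕ) : Q x n = ∑ i ∈ Finset.Icc 1 m, a i * x n ^ i := by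
    rw [coeFn_sum, Finset.sum_apply]
    refine Finset.sum_congr rfl fun i hi => ?_
    obtain ⟨k, rfl⟩ := Nat.exists_eq_add_one.mpr (Finset.mem_Icc.mp hi).1
    simp [powSucc_apply]
  refine ⟨fun x => funext (hQ x) ▸ (Q x).2, Q, hQ, fun xbar => ?_⟩
  choose D hD hQD using fun i => hasFDerivAt_powSucc (i - 1) xbar
  refine ⟨∑ i ∈ Finset.Icc 1 m, a i • D i, fun v n => ?_,
    HasFDerivAt.fun_sum fun i _ => (hQD i).const_smul (a i)⟩
  rw [sum_apply, coeFn_sum, Finset.sum_apply]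
  refine Finset.sum_congr rfl fun i hi => ?_
  obtain ⟨k, rfl⟩ := Nat.exists_eq_add_one.mpr (Finset.mem_Icc.mp hi).1
  simp only [smul_apply, coeFn_smul, Pi.smul_apply, hD, add_tsub_cancel_right, smul_eq_mul,
    Nat.cast_add, Nat.cast_one]
  ring

/-- For `1 < p < ∞`, a positive integer `m` and real coefficients `a 1, …, a m`, the
polynomial type operator `Q_m : ℓ^p → ℓ^p`, `(Q_m x)_n = ∑_{i=1}^m a_i x_n ^ i`, is well
defined and Fréchet differentiable at every `xbar ∈ ℓ^p`, with Fréchet derivative the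
continuous linear pointwise multiplication operator
`v ↦ (∑_{i=1}^m i * a_i * xbar_n ^ (i-1) * v_n)_n`. -/
theorem lp_polynomial_operator_frechet_differentiable
    (p : ℝ≥0∞) [Fact (1 ≤ p)] (hp : 1 < p) (hp' : p ≠ ⊤) (m : ℕ) (hm : 0 < m)
    (a : ℕ → ℝ) :
    (∀ x : lp (fun _ : ℕ => ℝ) p,
      Memℓp (fun n : ℕ => ∑ i ∈ Finset.Icc 1 m, a i * (x n) ^ i) p) ∧
    ∃ Q : lp (fun _ : ℕ => ℝ) p → lp (fun _ : ℕ => ℝ) p,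
      (∀ x : lp (fun _ : ℕ => ℝ) p, ∀ n : ℕ,
        Q x n = ∑ i ∈ Finset.Icc 1 m, a i * (x n) ^ i) ∧
      ∀ xbar : lp (fun _ : ℕ => ℝ) p,
        ∃ D : lp (fun _ : ℕ => ℝ) p →L[ℝ] lp (fun _ : ℕ => ℝ) p,
          (∀ v : lp (fun _ : ℕ => ℝ) p, ∀ n : ℕ,
            D v n = ∑ i ∈ Finset.Icc 1 m, (i : ℝ) * a i * (xbar n) ^ (i - 1) * v n) ∧
          HasFDerivAt Q D xbar :=
  lp_polynomial_operator_frechet_differentiable_general p m a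
end

section
/- Let 1 < p < ∞, let m be a positive integer and let a_1, …, a_m be real numbers with a_1 ≠ 0, and let Q_m : ℓ^p → ℓ^p be the polynomial type operator Q_m(x) = (∑_{i=1}^m a_i x_n^i)_n. Let ⪯_K be the coordinatewise order on ℓ^p: x ⪯_K y iff x_n ≤ y_n for every n. Then Q_m has no ⪯_K-extrema: there is no x̄ ∈ ℓ^p such that Q_m(x) ⪯_K Q_m(x̄) for all x ∈ ℓ^p, and no x̄ ∈ ℓ^p such that Q_m(x̄) ⪯_K Q_m(x) for all x ∈ ℓ^p. -/
/-!
The scalar polynomial `P t = ∑ a_i t^i` vanishes at `0` and has derivative `a_1 ≠ 0` there, so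
`0` is not a local extremum: `P` takes a value `P t₊ > 0` and a value `P t₋ < 0`. The coordinates
of any `y ∈ ℓ^p`, `p < ∞`, tend to `0`, so some coordinate `n` of `Q x̄` lies strictly between
`P t₋` and `P t₊`, while `Q (t₊ eₙ)` and `Q (t₋ eₙ)` have `n`-th coordinates `P t₊` and `P t₋`.
-/

open scoped ENNReal
open Filter Topology

theorem Memℓp.tendsto_norm_cofinite_zero {α : Type*} {E : α → Type*}
    [∀ i, NormedAddCommGroup (E i)] {p : ℝ≥0∞} (hp : 0 < p.toReal) {f : ∀ i, E i}
    (hf : Memℓp f p) : Tendsto (fun i => ‖f i‖) cofinite (𝓝 0) := by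
  have hroot : Tendsto (fun y : ℝ => y ^ p.toReal⁻¹) (𝓝 0) (𝓝 0) := by
    simpa [Real.zero_rpow (inv_ne_zero hp.ne')] using
      (Real.continuousAt_rpow_const 0 p.toReal⁻¹ (Or.inr (inv_nonneg.mpr hp.le))).tendsto
  convert hroot.comp (hf.summable hp).tendsto_cofinite_zero using 2 with i
  simp [Real.rpow_rpow_inv (norm_nonneg (f i)) hp.ne']

theorem exists_lt_of_hasDerivAt_ne_zero {f : ℝ → ℝ} {f' x : ℝ} (hf : HasDerivAt f f' x)
    (hf' : f' ≠ 0) : ∃ t, f x < f t := by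
  by_contra! h
  exact hf' (IsLocalMax.hasDerivAt_eq_zero (Eventually.of_forall h) hf)

theorem exists_gt_of_hasDerivAt_ne_zero {f : ℝ → ℝ} {f' x : ℝ} (hf : HasDerivAt f f' x)
    (hf' : f' ≠ 0) : ∃ t, f t < f x := by
  by_contra! h
  exact hf' (IsLocalMin.hasDerivAt_eq_zero (Eventually.of_forall h) hf)

theorem hasDerivAt_sum_Icc_mul_pow_zero {m : ℕ} (hm : 0 < m) (a : ℕ → ℝ) :
    HasDerivAt (fun t : ℝ => ∑ i ∈ Finset.Icc 1 m, a i * t ^ i) (a 1) 0 := by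
  have hterm : ∀ i ∈ Finset.Icc 1 m,
      HasDerivAt (fun t : ℝ => a i * t ^ i) (a i * (i * 0 ^ (i - 1))) 0 :=
    fun i _ => (hasDerivAt_pow i 0).const_mul (a i)
  refine (HasDerivAt.fun_sum hterm).congr_deriv ?_
  rw [Finset.sum_eq_single_of_mem 1 (Finset.mem_Icc.mpr ⟨le_rfl, hm⟩)]
  · simp
  · intro i hi hi1
    have : i - 1 ≠ 0 := by have := (Finset.mem_Icc.mp hi).1; omega
    simp [this]

theorem lp.tendsto_apply_atTop_zero {E : Type*} [NormedAddCommGroup E] {p : ℝ≥0∞}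
    (hp : 0 < p.toReal) (y : lp (fun _ : ℕ => E) p) : Tendsto (fun n => y n) atTop (𝓝 0) := by
  rw [tendsto_zero_iff_norm_tendsto_zero, ← Nat.cofinite_eq_atTop]
  exact (lp.memℓp y).tendsto_norm_cofinite_zero hp

theorem lp_polynomial_operator_no_order_extrema_general
    (p : ℝ≥0∞) [Fact (1 ≤ p)] (hp' : p ≠ ⊤) (m : ℕ) (hm : 0 < m)
    (a : ℕ → ℝ) (ha : a 1 ≠ 0)
    (Q : lp (fun _ : ℕ => ℝ) p → lp (fun _ : ℕ => ℝ) p)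
    (hQ : ∀ x : lp (fun _ : ℕ => ℝ) p, ∀ n : ℕ,
      Q x n = ∑ i ∈ Finset.Icc 1 m, a i * (x n) ^ i) :
    (¬ ∃ xbar : lp (fun _ : ℕ => ℝ) p, ∀ x : lp (fun _ : ℕ => ℝ) p, ∀ n : ℕ,
        Q x n ≤ Q xbar n) ∧
    (¬ ∃ xbar : lp (fun _ : ℕ => ℝ) p, ∀ x : lp (fun _ : ℕ => ℝ) p, ∀ n : ℕ,
        Q xbar n ≤ Q x n) := by
  have hp : 0 < p.toReal := ENNReal.toReal_pos (zero_lt_one.trans_le Fact.out).ne' hp'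
  set P : ℝ → ℝ := fun t => ∑ i ∈ Finset.Icc 1 m, a i * t ^ i
  have hP0 : P 0 = 0 := Finset.sum_eq_zero fun i hi => by
    rw [zero_pow (Nat.one_le_iff_ne_zero.mp (Finset.mem_Icc.mp hi).1), mul_zero]
  have hP' : HasDerivAt P (a 1) 0 := hasDerivAt_sum_Icc_mul_pow_zero hm a
  have hQ_single : ∀ n t, Q (lp.single p n t) n = P t := fun n t => by
    rw [hQ, lp.single_apply_self]
  refine ⟨fun ⟨xbar, hmax⟩ => ?_, fun ⟨xbar, hmin⟩ => ?_⟩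
  · obtain ⟨t, ht⟩ := exists_lt_of_hasDerivAt_ne_zero hP' ha
    rw [hP0] at ht
    obtain ⟨n, hn⟩ :=
      ((lp.tendsto_apply_atTop_zero hp (Q xbar)).eventually (gt_mem_nhds ht)).exists
    linarith [hmax (lp.single p n t) n, hQ_single n t]
  · obtain ⟨t, ht⟩ := exists_gt_of_hasDerivAt_ne_zero hP' ha
    rw [hP0] at ht
    obtain ⟨n, hn⟩ :=
      ((lp.tendsto_apply_atTop_zero hp (Q xbar)).eventually (lt_mem_nhds ht)).exists
    linarith [hmin (lp.single p n t) n, hQ_single n t]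

/-- For `1 < p < ∞`, a positive integer `m` and coefficients with `a 1 ≠ 0`, the polynomial
type operator `Q_m : ℓ^p → ℓ^p`, `(Q_m x)_n = ∑_{i=1}^m a_i x_n^i`, has no extrema with
respect to the coordinatewise order `⪯_K` on `ℓ^p`: no point of `ℓ^p` is an absolute
`⪯_K`-maximum point of `Q_m`, and none is an absolute `⪯_K`-minimum point of `Q_m`. -/
theorem lp_polynomial_operator_no_order_extrema
    (p : ℝ≥0∞) [Fact (1 ≤ p)] (hp : 1 < p) (hp' : p ≠ ⊤) (m : ℕ) (hm : 0 < m)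
    (a : ℕ → ℝ) (ha : a 1 ≠ 0)
    (Q : lp (fun _ : ℕ => ℝ) p → lp (fun _ : ℕ => ℝ) p)
    (hQ : ∀ x : lp (fun _ : ℕ => ℝ) p, ∀ n : ℕ,
      Q x n = ∑ i ∈ Finset.Icc 1 m, a i * (x n) ^ i) :
    (¬ ∃ xbar : lp (fun _ : ℕ => ℝ) p, ∀ x : lp (fun _ : ℕ => ℝ) p, ∀ n : ℕ,
        Q x n ≤ Q xbar n) ∧
    (¬ ∃ xbar : lp (fun _ : ℕ => ℝ) p, ∀ x : lp (fun _ : ℕ => ℝ) p, ∀ n : ℕ,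
        Q xbar n ≤ Q x n) :=
  lp_polynomial_operator_no_order_extrema_general p hp' m hm a ha Q hQ
end
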